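/- For every natural number m, sum_{k=0}^m (3k+1)!/(k! * k! * (k+1)!) * 3^(-3k)/(k+2) = ((m+1)/8) * binom(3m+4, m+1) * binom(2m+3, m+1) * 3^(-3m-1), as rational numbers. -/

import Mathlib

/-!
The partial sums telescope: writing `F m` for the right-hand side, `F 0 = g 0` and
`F (m + 1) - F m = g (m + 1)`. In factorial form
`F m = (3m+4)! / (8 m! (m+1)! (m+2)! 3^(3m+1))`, and the ratio `F (m + 1) / F m` is
`(3m+5)(3m+6)(3m+7) / (27 (m+1)(m+2)(m+3))`, which exceeds `1` by exactly
`8 / (9 (m+1)(m+3))`; this is the ratio `g (m + 1) / F m`.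
-/

namespace SumGClosed

def g (k : ℕ) : ℚ :=
  ((3 * k + 1).factorial : ℚ) /
    ((k.factorial : ℚ) * (k.factorial : ℚ) * ((k + 1).factorial : ℚ)) /
    (3 : ℚ) ^ (3 * k) / (k + 2)

def closedForm (m : ℕ) : ℚ :=
  ((m : ℚ) + 1) / 8 * (Nat.choose (3 * m + 4) (m + 1) : ℚ) *
    (Nat.choose (2 * m + 3) (m + 1) : ℚ) / (3 : ℚ) ^ (3 * m + 1)

theorem closedForm_eq_factorial (m : ℕ) :
    closedForm m = ((3 * m + 4).factorial : ℚ) /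
      (8 * m.factorial * (m + 1).factorial * (m + 2).factorial * 3 ^ (3 * m + 1)) := by
  rw [closedForm, Nat.cast_choose ℚ (show m + 1 ≤ 3 * m + 4 by omega),
    Nat.cast_choose ℚ (show m + 1 ≤ 2 * m + 3 by omega),
    show 3 * m + 4 - (m + 1) = 2 * m + 3 by omega, show 2 * m + 3 - (m + 1) = m + 2 by omega]
  simp only [Nat.factorial_succ m, Nat.cast_mul, Nat.cast_add, Nat.cast_one]
  field_simp

theorem closedForm_zero : closedForm 0 = g 0 := by
  norm_num [closedForm, g, Nat.choose]

theorem closedForm_succ (m : ℕ) : closedForm (m + 1) = closedForm m + g (m + 1) := by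
  rw [closedForm_eq_factorial, closedForm_eq_factorial, g]
  rw [show 3 * (m + 1) + 4 = 3 * m + 4 + 3 by ring, show 3 * (m + 1) + 1 = 3 * m + 4 by ring,
    show 3 * (m + 1) = 3 * m + 3 by ring]
  simp only [Nat.factorial_succ, Nat.cast_mul, Nat.cast_add, Nat.cast_one, Nat.cast_ofNat]
  field_simp
  ring

end SumGClosed

open SumGClosed in
/-- Closed form: ∑_{k=0}^m (3k+1)!/(k! k! (k+1)!) 3^(-3k)/(k+2)
  = ((m+1)/8) C(3m+4,m+1) C(2m+3,m+1) 3^(-3m-1). -/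
theorem sum_g_closed_binom (m : ℕ) :
    ∑ k ∈ Finset.range (m + 1),
        ((3 * k + 1).factorial : ℚ) /
          ((k.factorial : ℚ) * (k.factorial : ℚ) * ((k + 1).factorial : ℚ)) /
          (3 : ℚ) ^ (3 * k) / (k + 2) =
      ((m : ℚ) + 1) / 8 * (Nat.choose (3 * m + 4) (m + 1) : ℚ) *
        (Nat.choose (2 * m + 3) (m + 1) : ℚ) / (3 : ℚ) ^ (3 * m + 1) := by
  change ∑ k ∈ Finset.range (m + 1), g k = closedForm m
  induction m with
  | zero => simp [closedForm_zero]
  | succ m ih => rw [Finset.sum_range_succ, ih, closedForm_succ]
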